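/- arXiv:1308.5798 — 2 statements merged into one kernel-verified Lean document; each statement's English description precedes it below -/
import Mathlib

section
/- Let P ⊆ R^{d+1} be a polytope and let p ∈ R^{d+1} \ P. Every equatorial face of P that is disjoint from the vertical line through p is visible from p, provided p lies above every non-vertical hyperplane spanned by vertices of P. More precisely (Lemma on visible equatorial faces): if A ⊆ R^d is a finite point configuration in general position, Â ⊆ R^{d+1} is a lexicographic lifting of A, and â_n is the last lifted point, then every equatorial face of conv(Â \ {â_n}) is visible from â_n. -/
/-- A configuration of n labeled points in ℝ^d is in general position if every d+1 of the
points are affinely independent (equivalently, no d+1 of them lie in a common hyperplane). -/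
def InGeneralPosition (d n : ℕ) (a : Fin n → EuclideanSpace ℝ (Fin d)) : Prop :=
  ∀ s : Finset (Fin n), s.card = d + 1 → AffineIndependent ℝ (fun i : s => a i)

/-- `h` gives a lexicographic lifting `i ↦ (a i, h i)` of the configuration `a`: for every
index i ≥ d+2 (0-indexed: (i:ℕ) ≥ d+1), the lifted point (a i, h i) lies strictly above
(if h i > 0) or strictly below (if h i < 0) every hyperplane of ℝ^{d+1} = ℝ^d × ℝ spanned
by d+1 affinely independent earlier lifted points; such a hyperplane is presented with a
normal vector (v, s) with positive last coordinate s and offset r. -/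
def IsLexLifting (d n : ℕ) (a : Fin n → EuclideanSpace ℝ (Fin d)) (h : Fin n → ℝ) : Prop :=
  ∀ i : Fin n, d + 1 ≤ (i : ℕ) →
    h i ≠ 0 ∧
    ∀ T : Finset (Fin n), T.card = d + 1 → (∀ j ∈ T, (j : ℕ) < (i : ℕ)) →
      AffineIndependent ℝ (fun j : T => ((a j, h j) : EuclideanSpace ℝ (Fin d) × ℝ)) →
      ∀ (v : EuclideanSpace ℝ (Fin d)) (s r : ℝ), 0 < s →
        (∀ j ∈ T, (inner ℝ (a j) v : ℝ) + h j * s = r) →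
        (0 < h i → r < (inner ℝ (a i) v : ℝ) + h i * s) ∧
        (h i < 0 → (inner ℝ (a i) v : ℝ) + h i * s < r)

namespace EqVisAux

/-- the affine (in fact linear) functional p ↦ ⟨p.1, u⟩ + p.2 * s on ℝ^d × ℝ. -/
noncomputable def lfE (d : ℕ) (u : EuclideanSpace ℝ (Fin d)) (s : ℝ) :
    (EuclideanSpace ℝ (Fin d) × ℝ) →ₗ[ℝ] ℝ where
  toFun p := (inner ℝ p.1 u : ℝ) + p.2 * s
  map_add' p q := by
    simp only [Prod.fst_add, Prod.snd_add, inner_add_left]; ring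
  map_smul' c p := by
    simp only [Prod.smul_fst, Prod.smul_snd, smul_eq_mul, real_inner_smul_left,
      RingHom.id_apply]; ring

lemma lfE_apply (d : ℕ) (u : EuclideanSpace ℝ (Fin d)) (s : ℝ)
    (p : EuclideanSpace ℝ (Fin d) × ℝ) : lfE d u s p = (inner ℝ p.1 u : ℝ) + p.2 * s := rfl

lemma indep_of_le {d n : ℕ} {a : Fin n → EuclideanSpace ℝ (Fin d)}
    (hgen : InGeneralPosition d n a) (hdn : d + 1 ≤ n) {T : Finset (Fin n)}
    (hT : T.card ≤ d + 1) : AffineIndependent ℝ (fun j : T => a j) := by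
  obtain ⟨T', hTT', -, hcard⟩ := Finset.exists_subsuperset_card_eq T.subset_univ hT
    (by simpa using hdn)
  have hind := hgen T' hcard
  have he : Function.Injective (fun j : T => (⟨j.1, hTT' j.2⟩ : T')) := by
    intro x y hxy
    have : (⟨x.1, hTT' x.2⟩ : T') = ⟨y.1, hTT' y.2⟩ := hxy
    exact Subtype.ext (congrArg (fun z : T' => z.1) this)
  exact hind.comp_embedding ⟨_, he⟩

lemma lift_indep {d n : ℕ} {a : Fin n → EuclideanSpace ℝ (Fin d)} {h : Fin n → ℝ}
    (hgen : InGeneralPosition d n a) (hdn : d + 1 ≤ n) {T : Finset (Fin n)}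
    (hT : T.card ≤ d + 1) :
    AffineIndependent ℝ (fun j : T => ((a j, h j) : EuclideanSpace ℝ (Fin d) × ℝ)) := by
  have hproj := indep_of_le hgen hdn hT
  have heq : (fun j : T => a j) =
      (LinearMap.fst ℝ (EuclideanSpace ℝ (Fin d)) ℝ).toAffineMap ∘
        (fun j : T => ((a j, h j) : EuclideanSpace ℝ (Fin d) × ℝ)) := rfl
  rw [heq] at hproj
  exact AffineIndependent.of_comp _ hproj

lemma flat_bound {d n : ℕ} {a : Fin n → EuclideanSpace ℝ (Fin d)}
    (hgen : InGeneralPosition d n a) (W : Finset (Fin n)) (u : EuclideanSpace ℝ (Fin d))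
    (c : ℝ) (hu : u ≠ 0) (heq : ∀ j ∈ W, (inner ℝ (a j) u : ℝ) = c) : W.card ≤ d := by
  by_contra hcard
  push_neg at hcard
  obtain ⟨W', hW'W, hW'card⟩ := Finset.exists_subset_card_eq (show d + 1 ≤ W.card by omega)
  have hind := hgen W' hW'card
  have hspan : vectorSpan ℝ (Set.range (fun j : W' => a j)) = ⊤ := by
    apply Submodule.eq_top_of_finrank_eq
    rw [hind.finrank_vectorSpan (show Fintype.card W' = d + 1 by
      simp [Fintype.card_coe, hW'card]), finrank_euclideanSpace_fin]
  -- the linear functional z ↦ ⟨z, u⟩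
  let L : EuclideanSpace ℝ (Fin d) →ₗ[ℝ] ℝ :=
    { toFun := fun z => (inner ℝ z u : ℝ)
      map_add' := fun p q => by simp only [inner_add_left]
      map_smul' := fun c p => by
        simp only [real_inner_smul_left, smul_eq_mul, RingHom.id_apply] }
  have hle : vectorSpan ℝ (Set.range (fun j : W' => a j)) ≤ LinearMap.ker L := by
    rw [vectorSpan_def]
    apply Submodule.span_le.mpr
    rintro z ⟨p, hp, q, hq, rfl⟩
    obtain ⟨i, rfl⟩ := hp
    obtain ⟨j, rfl⟩ := hq
    have h1 := heq i (hW'W i.2)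
    have h2 := heq j (hW'W j.2)
    simp only [SetLike.mem_coe, LinearMap.mem_ker]
    show (inner ℝ (a i - a j) u : ℝ) = 0
    rw [inner_sub_left, h1, h2, sub_self]
  have hu2 : u ∈ LinearMap.ker L := hle (by rw [hspan]; trivial)
  have : (inner ℝ u u : ℝ) = 0 := hu2
  exact hu (inner_self_eq_zero.mp this)

lemma aff_ext {d n : ℕ} {a : Fin n → EuclideanSpace ℝ (Fin d)}
    (hgen : InGeneralPosition d n a) (hdn : d + 1 ≤ n) (T : Finset (Fin n))
    (hT : T.card ≤ d + 1) (y : Fin n → ℝ) :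
    ∃ (u : EuclideanSpace ℝ (Fin d)) (c : ℝ), ∀ j ∈ T, (inner ℝ (a j) u : ℝ) + c = y j := by
  obtain ⟨T', hTT', -, hcard⟩ := Finset.exists_subsuperset_card_eq T.subset_univ hT
    (by simpa using hdn)
  let Φ : (EuclideanSpace ℝ (Fin d) × ℝ) →ₗ[ℝ] (T' → ℝ) :=
    { toFun := fun uc => fun j => (inner ℝ (a j) uc.1 : ℝ) + uc.2
      map_add' := fun p q => by
        funext j
        simp only [Prod.fst_add, Prod.snd_add, inner_add_right, Pi.add_apply]; ring
      map_smul' := fun cc p => by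
        funext j
        simp only [Prod.smul_fst, Prod.smul_snd, smul_eq_mul, real_inner_smul_right,
          RingHom.id_apply, Pi.smul_apply]; ring }
  have hker : ∀ uc, Φ uc = 0 → uc = 0 := by
    rintro ⟨u, c⟩ h0
    have hall : ∀ j ∈ T', (inner ℝ (a j) u : ℝ) = -c := by
      intro j hj
      have := congrFun h0 ⟨j, hj⟩
      simp only [Φ, LinearMap.coe_mk, AddHom.coe_mk, Pi.zero_apply] at this
      linarith
    have hu : u = 0 := by
      by_contra hu
      have := flat_bound hgen T' u (-c) hu hall
      omega
    have hc : c = 0 := by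
      obtain ⟨j, hj⟩ := Finset.card_pos.mp (show 0 < T'.card by omega)
      have := hall j hj
      rw [hu] at this
      simpa using this.symm
    simp [hu, hc, Prod.ext_iff]
  have hinj : Function.Injective Φ := by
    rw [← LinearMap.ker_eq_bot]
    exact LinearMap.ker_eq_bot'.mpr hker
  have hfr : Module.finrank ℝ (EuclideanSpace ℝ (Fin d) × ℝ)
      = Module.finrank ℝ (T' → ℝ) := by
    rw [Module.finrank_prod, finrank_euclideanSpace_fin, Module.finrank_self,
      Module.finrank_pi]
    simp [Fintype.card_coe, hcard]
  have hsurj : Function.Surjective Φ :=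
    (LinearMap.injective_iff_surjective_of_finrank_eq_finrank hfr).mp hinj
  obtain ⟨⟨u, c⟩, hΦ⟩ := hsurj (fun j => y j)
  refine ⟨u, c, fun j hj => ?_⟩
  exact congrFun hΦ ⟨j, hTT' hj⟩

lemma rot_step {n m : ℕ} (val g : Fin n → ℝ) (c : ℝ) (W : Finset (Fin n))
    (hle : ∀ j : Fin n, (j : ℕ) < m → val j ≤ c)
    (hiff : ∀ j : Fin n, (j : ℕ) < m → (val j = c ↔ j ∈ W))
    (hgW : ∀ j ∈ W, g j = 0)
    (q0 : Fin n) (hq0m : (q0 : ℕ) < m) (hq0W : q0 ∉ W) (hgq0 : 0 < g q0) :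
    ∃ t : ℝ, 0 < t ∧ ∃ q : Fin n, (q : ℕ) < m ∧ q ∉ W ∧ val q + t * g q = c ∧
      ∀ j : Fin n, (j : ℕ) < m → val j + t * g j ≤ c := by
  classical
  set P : Finset (Fin n) := Finset.univ.filter (fun j => (j : ℕ) < m ∧ 0 < g j) with hP
  have hq0P : q0 ∈ P := by simp [hP, hq0m, hgq0]
  obtain ⟨q, hqP, hqmin⟩ := Finset.exists_min_image P (fun j => (c - val j) / g j) ⟨q0, hq0P⟩
  rw [hP, Finset.mem_filter] at hqP
  obtain ⟨-, hqm, hgq⟩ := hqP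
  have hqW : q ∉ W := fun hq => by have := hgW q hq; linarith
  have hvq : val q < c := lt_of_le_of_ne (hle q hqm) (fun e => hqW ((hiff q hqm).mp e))
  refine ⟨(c - val q) / g q, div_pos (by linarith) hgq, q, hqm, hqW, by field_simp; ring, ?_⟩
  intro j hjm
  by_cases hgj : 0 < g j
  · have hjP : j ∈ P := by simp [hP, hjm, hgj]
    have hmin := hqmin j hjP
    have h2 := (le_div_iff₀ hgj).mp hmin
    linarith
  · push_neg at hgj
    have ht : 0 < (c - val q) / g q := div_pos (by linarith) hgq
    nlinarith [hle j hjm]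

/-- there is an index below `n-1` outside any small finset -/
lemma exists_fresh {d n : ℕ} (hn : d + 2 ≤ n) (W : Finset (Fin n)) (hW : W.card ≤ d) :
    ∃ q0 : Fin n, (q0 : ℕ) < n - 1 ∧ q0 ∉ W := by
  by_contra hc
  push_neg at hc
  have hinj : Function.Injective (fun i : Fin (d + 1) => (⟨i.1, by omega⟩ : Fin n)) := by
    intro x y hxy
    have : ((⟨x.1, by omega⟩ : Fin n) : ℕ) = ((⟨y.1, by omega⟩ : Fin n) : ℕ) :=
      congrArg Fin.val hxy
    ext
    simpa using this
  have hsub : Finset.univ.image (fun i : Fin (d + 1) => (⟨i.1, by omega⟩ : Fin n)) ⊆ W := by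
    intro j hj
    simp only [Finset.mem_image, Finset.mem_univ, true_and] at hj
    obtain ⟨i, rfl⟩ := hj
    exact hc _ (by simp; omega)
  have := Finset.card_le_card hsub
  rw [Finset.card_image_of_injective _ hinj, Finset.card_univ, Fintype.card_fin] at this
  omega

/-- Phase 2 of the rotation: grow the contact set until it has d+1 points,
keeping the vertical component s of the normal fixed. -/
lemma phase2 {d n : ℕ} (hn : d + 2 ≤ n) {a : Fin n → EuclideanSpace ℝ (Fin d)}
    (hgen : InGeneralPosition d n a) (h : Fin n → ℝ)
    (v : EuclideanSpace ℝ (Fin d)) (r : ℝ) (s : ℝ) :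
    ∀ (k : ℕ) (u : EuclideanSpace ℝ (Fin d)) (c : ℝ) (W : Finset (Fin n)),
      (∀ j ∈ W, (j : ℕ) < n - 1) →
      (∀ j : Fin n, (j : ℕ) < n - 1 → (inner ℝ (a j) u : ℝ) + h j * s ≤ c) →
      (∀ j : Fin n, (j : ℕ) < n - 1 → ((inner ℝ (a j) u : ℝ) + h j * s = c ↔ j ∈ W)) →
      (∀ j : Fin n, (j : ℕ) < n - 1 → (inner ℝ (a j) v : ℝ) = r → j ∈ W) →
      d + 1 ≤ W.card + k →
      ∃ (u' : EuclideanSpace ℝ (Fin d)) (c' : ℝ) (T : Finset (Fin n)),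
        (∀ j : Fin n, (j : ℕ) < n - 1 → (inner ℝ (a j) u' : ℝ) + h j * s ≤ c') ∧
        (∀ j : Fin n, (j : ℕ) < n - 1 → (inner ℝ (a j) v : ℝ) = r →
          (inner ℝ (a j) u' : ℝ) + h j * s = c') ∧
        (∀ j ∈ T, (j : ℕ) < n - 1) ∧ T.card = d + 1 ∧
        (∀ j ∈ T, (inner ℝ (a j) u' : ℝ) + h j * s = c') := by
  intro k
  induction k with
  | zero =>
    intro u c W hWb hle hiffW hW0 hcard
    obtain ⟨T, hTW, hTcard⟩ := Finset.exists_subset_card_eq (show d + 1 ≤ W.card by omega)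
    exact ⟨u, c, T, hle, fun j hj hr => (hiffW j hj).mpr (hW0 j hj hr),
      fun j hj => hWb j (hTW hj), hTcard,
      fun j hj => (hiffW j (hWb j (hTW hj))).mpr (hTW hj)⟩
  | succ k ih =>
    intro u c W hWb hle hiffW hW0 hcard
    by_cases hbig : d + 1 ≤ W.card
    · obtain ⟨T, hTW, hTcard⟩ := Finset.exists_subset_card_eq hbig
      exact ⟨u, c, T, hle, fun j hj hr => (hiffW j hj).mpr (hW0 j hj hr),
        fun j hj => hWb j (hTW hj), hTcard,
        fun j hj => (hiffW j (hWb j (hTW hj))).mpr (hTW hj)⟩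
    · push_neg at hbig
      obtain ⟨q0, hq0m, hq0W⟩ := exists_fresh hn W (by omega)
      classical
      obtain ⟨ug, cg, hug⟩ := aff_ext hgen (by omega) (insert q0 W)
        (by rw [Finset.card_insert_of_notMem hq0W]; omega)
        (fun j => if j = q0 then 1 else 0)
      set g : Fin n → ℝ := fun j => (inner ℝ (a j) ug : ℝ) + cg with hg
      have hgW : ∀ j ∈ W, g j = 0 := by
        intro j hj
        have := hug j (Finset.mem_insert_of_mem hj)
        rw [if_neg (fun e : j = q0 => hq0W (e ▸ hj))] at this
        simpa [hg] using this
      have hgq0 : 0 < g q0 := by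
        have := hug q0 (Finset.mem_insert_self q0 W)
        rw [if_pos rfl] at this
        simp only [hg]; linarith
      obtain ⟨t, ht, q, hqm, hqW, hqeq, hble⟩ := rot_step
        (fun j => (inner ℝ (a j) u : ℝ) + h j * s) g c W hle hiffW hgW q0 hq0m hq0W hgq0
      set u' := u + t • ug with hu'
      set c' := c - t * cg with hc'
      have hval : ∀ j : Fin n, (inner ℝ (a j) u' : ℝ) + h j * s
          = ((inner ℝ (a j) u : ℝ) + h j * s) + t * g j - t * cg := by
        intro j
        rw [hu']
        rw [inner_add_right, real_inner_smul_right]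
        simp only [hg]; ring
      set W' : Finset (Fin n) := Finset.univ.filter
        (fun j => (j : ℕ) < n - 1 ∧ (inner ℝ (a j) u' : ℝ) + h j * s = c') with hW'
      have hW'b : ∀ j ∈ W', (j : ℕ) < n - 1 := by
        intro j hj; rw [hW', Finset.mem_filter] at hj; exact hj.2.1
      have hle' : ∀ j : Fin n, (j : ℕ) < n - 1 → (inner ℝ (a j) u' : ℝ) + h j * s ≤ c' := by
        intro j hj
        rw [hval j, hc']
        have := hble j hj
        linarith
      have hiff' : ∀ j : Fin n, (j : ℕ) < n - 1 →
          ((inner ℝ (a j) u' : ℝ) + h j * s = c' ↔ j ∈ W') := by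
        intro j hj
        rw [hW', Finset.mem_filter]
        simp [hj]
      have hWsub : W ⊆ W' := by
        intro j hj
        rw [hW', Finset.mem_filter]
        refine ⟨Finset.mem_univ j, hWb j hj, ?_⟩
        rw [hval j, hgW j hj, hc']
        have := (hiffW j (hWb j hj)).mpr hj
        linarith
      have hqW' : q ∈ W' := by
        rw [hW', Finset.mem_filter]
        refine ⟨Finset.mem_univ q, hqm, ?_⟩
        rw [hval q, hc']
        linarith [hqeq]
      have hcard' : W.card < W'.card :=
        Finset.card_lt_card ⟨hWsub, fun hsub => hqW (hsub hqW')⟩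
      exact ih u' c' W' hW'b hle' hiff' (fun j hj hr => hWsub (hW0 j hj hr)) (by omega)

/-- Phase 1 + Phase 2: existence of a supporting hyperplane through the equatorial
face with nonzero vertical normal component of the prescribed sign, containing
d+1 of the lifted points. -/
lemma exists_support {d n : ℕ} (hn : d + 2 ≤ n) {a : Fin n → EuclideanSpace ℝ (Fin d)}
    (hgen : InGeneralPosition d n a) (h : Fin n → ℝ) (hlast : h ⟨n - 1, Nat.sub_lt (by omega) Nat.one_pos⟩ ≠ 0)
    (v : EuclideanSpace ℝ (Fin d)) (r : ℝ) (hv : v ≠ 0)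
    (hsupp : ∀ j : Fin n, (j : ℕ) < n - 1 → (inner ℝ (a j) v : ℝ) ≤ r) :
    ∃ (u : EuclideanSpace ℝ (Fin d)) (s c : ℝ) (T : Finset (Fin n)),
      (0 < h ⟨n - 1, Nat.sub_lt (by omega) Nat.one_pos⟩ → 0 < s) ∧ (h ⟨n - 1, Nat.sub_lt (by omega) Nat.one_pos⟩ < 0 → s < 0) ∧
      (∀ j : Fin n, (j : ℕ) < n - 1 → (inner ℝ (a j) u : ℝ) + h j * s ≤ c) ∧
      (∀ j : Fin n, (j : ℕ) < n - 1 → (inner ℝ (a j) v : ℝ) = r →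
        (inner ℝ (a j) u : ℝ) + h j * s = c) ∧
      (∀ j ∈ T, (j : ℕ) < n - 1) ∧ T.card = d + 1 ∧
      (∀ j ∈ T, (inner ℝ (a j) u : ℝ) + h j * s = c) := by
  classical
  set W0 : Finset (Fin n) := Finset.univ.filter
    (fun j => (j : ℕ) < n - 1 ∧ (inner ℝ (a j) v : ℝ) = r) with hW0
  have hW0b : ∀ j ∈ W0, (j : ℕ) < n - 1 := by
    intro j hj; rw [hW0, Finset.mem_filter] at hj; exact hj.2.1
  have hW0r : ∀ j ∈ W0, (inner ℝ (a j) v : ℝ) = r := by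
    intro j hj; rw [hW0, Finset.mem_filter] at hj; exact hj.2.2
  have hW0card : W0.card ≤ d := flat_bound hgen W0 v r hv hW0r
  obtain ⟨q0, hq0m, hq0W⟩ := exists_fresh hn W0 hW0card
  set σ : ℝ := if 0 < h ⟨n - 1, Nat.sub_lt (by omega) Nat.one_pos⟩ then 1 else -1 with hσ
  obtain ⟨ug, cg, hug⟩ := aff_ext hgen (by omega) (insert q0 W0)
    (by rw [Finset.card_insert_of_notMem hq0W]; omega)
    (fun j => (if j = q0 then 1 else 0) - σ * h j)
  set g : Fin n → ℝ := fun j => (inner ℝ (a j) ug : ℝ) + cg + σ * h j with hg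
  have hgW : ∀ j ∈ W0, g j = 0 := by
    intro j hj
    have := hug j (Finset.mem_insert_of_mem hj)
    rw [if_neg (fun e : j = q0 => hq0W (e ▸ hj))] at this
    simp only [hg]; linarith
  have hgq0 : 0 < g q0 := by
    have := hug q0 (Finset.mem_insert_self q0 W0)
    rw [if_pos rfl] at this
    simp only [hg]; linarith
  have hiff0 : ∀ j : Fin n, (j : ℕ) < n - 1 → ((inner ℝ (a j) v : ℝ) = r ↔ j ∈ W0) := by
    intro j hj
    rw [hW0, Finset.mem_filter]
    simp [hj]
  obtain ⟨t, ht, q, hqm, hqW, hqeq, hble⟩ := rot_step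
    (fun j => (inner ℝ (a j) v : ℝ)) g r W0 hsupp hiff0 hgW q0 hq0m hq0W hgq0
  set s1 : ℝ := t * σ with hs1
  set u1 := v + t • ug with hu1
  set c1 := r - t * cg with hc1
  have hval : ∀ j : Fin n, (inner ℝ (a j) u1 : ℝ) + h j * s1
      = (inner ℝ (a j) v : ℝ) + t * g j - t * cg := by
    intro j
    rw [hu1, inner_add_right, real_inner_smul_right]
    simp only [hg, hs1]; ring
  have hle1 : ∀ j : Fin n, (j : ℕ) < n - 1 → (inner ℝ (a j) u1 : ℝ) + h j * s1 ≤ c1 := by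
    intro j hj
    rw [hval j, hc1]
    have := hble j hj
    linarith
  set W1 : Finset (Fin n) := Finset.univ.filter
    (fun j => (j : ℕ) < n - 1 ∧ (inner ℝ (a j) u1 : ℝ) + h j * s1 = c1) with hW1
  have hW1b : ∀ j ∈ W1, (j : ℕ) < n - 1 := by
    intro j hj; rw [hW1, Finset.mem_filter] at hj; exact hj.2.1
  have hiff1 : ∀ j : Fin n, (j : ℕ) < n - 1 →
      ((inner ℝ (a j) u1 : ℝ) + h j * s1 = c1 ↔ j ∈ W1) := by
    intro j hj
    rw [hW1, Finset.mem_filter]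
    simp [hj]
  have hW01 : ∀ j : Fin n, (j : ℕ) < n - 1 → (inner ℝ (a j) v : ℝ) = r → j ∈ W1 := by
    intro j hj hr
    have hjW0 : j ∈ W0 := (hiff0 j hj).mp hr
    apply (hiff1 j hj).mp
    rw [hval j, hgW j hjW0, hr, hc1]
    ring
  obtain ⟨u', c', T, hle', hvan', hTb, hTcard, hTeq⟩ :=
    phase2 hn hgen h v r s1 (d + 1) u1 c1 W1 hW1b hle1 hiff1 hW01 (by omega)
  refine ⟨u', s1, c', T, ?_, ?_, hle', hvan', hTb, hTcard, hTeq⟩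
  · intro hpos
    rw [hs1, hσ, if_pos hpos]
    linarith
  · intro hneg
    rw [hs1, hσ, if_neg (by linarith)]
    linarith

end EqVisAux

/-- Visibility of equatorial faces: let Â ⊆ ℝ^{d+1} = ℝ^d × ℝ be a lexicographic lifting of
a configuration A in general position, let Q = conv(Â \ {â_n}) and let â_n be the last
lifted point. Every (nonempty) equatorial face F of Q — i.e. a face cut out by a supporting
hyperplane whose normal (v, 0) has last coordinate 0 — is visible from â_n: there is a
point x in the relative interior of F such that the segment [x, â_n] meets Q only in x. -/
theorem equatorial_faces_visible (d n : ℕ) (hn : d + 2 ≤ n)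
    (a : Fin n → EuclideanSpace ℝ (Fin d)) (h : Fin n → ℝ)
    (hgen : InGeneralPosition d n a) (hlift : IsLexLifting d n a h) :
    ∀ (F : Set (EuclideanSpace ℝ (Fin d) × ℝ)) (v : EuclideanSpace ℝ (Fin d)) (r : ℝ),
      v ≠ 0 →
      (∀ p ∈ convexHull ℝ {p : EuclideanSpace ℝ (Fin d) × ℝ |
          ∃ j : Fin n, (j : ℕ) < n - 1 ∧ p = (a j, h j)}, (inner ℝ p.1 v : ℝ) ≤ r) →
      F = {p ∈ convexHull ℝ {p : EuclideanSpace ℝ (Fin d) × ℝ |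
          ∃ j : Fin n, (j : ℕ) < n - 1 ∧ p = (a j, h j)} | (inner ℝ p.1 v : ℝ) = r} →
      F.Nonempty →
      ∃ x ∈ intrinsicInterior ℝ F,
        segment ℝ x (a ⟨n - 1, by omega⟩, h ⟨n - 1, by omega⟩) ∩
          convexHull ℝ {p : EuclideanSpace ℝ (Fin d) × ℝ |
            ∃ j : Fin n, (j : ℕ) < n - 1 ∧ p = (a j, h j)} = {x} := by
  classical
  intro F v r hv hsupp hF hFne
  open EqVisAux in
  set S : Set (EuclideanSpace ℝ (Fin d) × ℝ) :=
    {p | ∃ j : Fin n, (j : ℕ) < n - 1 ∧ p = (a j, h j)} with hS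
  set pt : EuclideanSpace ℝ (Fin d) × ℝ := (a ⟨n - 1, by omega⟩, h ⟨n - 1, by omega⟩) with hpt
  -- the last index
  set jl : Fin n := ⟨n - 1, by omega⟩ with hjl
  have hjlval : (jl : ℕ) = n - 1 := rfl
  have hjlge : d + 1 ≤ (jl : ℕ) := by rw [hjlval]; omega
  have hlift0 := hlift jl hjlge
  have hlast_ne : h jl ≠ 0 := hlift0.1
  -- F as an intersection
  have hFeq : F = convexHull ℝ S ∩ {p | (inner ℝ p.1 v : ℝ) = r} := by
    rw [hF]
    ext p
    simp [Set.mem_inter_iff, Set.mem_setOf_eq]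
  -- F is convex
  have hFconv : Convex ℝ F := by
    rw [hFeq]
    refine (convex_convexHull ℝ S).inter ?_
    have : {p : EuclideanSpace ℝ (Fin d) × ℝ | (inner ℝ p.1 v : ℝ) = r}
        = {p | EqVisAux.lfE d v 0 p = r} := by
      ext p
      simp [EqVisAux.lfE_apply]
    rw [this]
    exact convex_hyperplane (EqVisAux.lfE d v 0).isLinear r
  -- pick a point in the intrinsic interior
  obtain ⟨x, hxI⟩ := Set.Nonempty.intrinsicInterior hFconv hFne
  have hxF : x ∈ F := intrinsicInterior_subset hxI
  have hxF' := hxF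
  rw [hFeq] at hxF'
  obtain ⟨hxQ, hxr⟩ := hxF'
  -- support on vertices
  have hsupp' : ∀ j : Fin n, (j : ℕ) < n - 1 → (inner ℝ (a j) v : ℝ) ≤ r := by
    intro j hj
    exact hsupp (a j, h j) (subset_convexHull ℝ S ⟨j, hj, rfl⟩)
  -- get the rotated supporting hyperplane
  obtain ⟨u, s, c, T, hspos, hsneg, hle, hvan, hTb, hTcard, hTeq⟩ :=
    EqVisAux.exists_support hn hgen h hlast_ne v r hv hsupp'
  -- strict inequality at the apex
  have hindT := EqVisAux.lift_indep (h := h) hgen (by omega) (le_of_eq hTcard)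
  have hTlt : ∀ j ∈ T, (j : ℕ) < (jl : ℕ) := by
    intro j hj
    rw [hjlval]
    exact hTb j hj
  have hstrict : c < (inner ℝ (a jl) u : ℝ) + h jl * s := by
    rcases lt_trichotomy (h jl) 0 with hneg | hzero | hpos
    · have hs : s < 0 := hsneg hneg
      have heqs : ∀ j ∈ T, (inner ℝ (a j) (-u) : ℝ) + h j * (-s) = -c := by
        intro j hj
        rw [inner_neg_right]
        have := hTeq j hj
        linarith
      have := (hlift0.2 T hTcard hTlt hindT (-u) (-s) (-c) (by linarith) heqs).2 hneg
      rw [inner_neg_right] at this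
      linarith
    · exact absurd hzero hlast_ne
    · have hs : 0 < s := hspos hpos
      exact (hlift0.2 T hTcard hTlt hindT u s c hs hTeq).1 hpos
  -- the supporting functional bounds the hull
  have hQle : ∀ p ∈ convexHull ℝ S, EqVisAux.lfE d u s p ≤ c := by
    intro p hp
    have hsub : S ⊆ {p | EqVisAux.lfE d u s p ≤ c} := by
      rintro p ⟨j, hj, rfl⟩
      exact hle j hj
    exact convexHull_min hsub (convex_halfSpace_le (EqVisAux.lfE d u s).isLinear c) hp
  -- the value of the supporting functional at x is exactly c
  have hfx : EqVisAux.lfE d u s x = c := by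
    rw [convexHull_eq] at hxQ
    obtain ⟨ι, tf, wt, z, hw0, hw1, hzS, hcm⟩ := hxQ
    have hxsum : ∑ i ∈ tf, wt i • z i = x := by
      rw [← Finset.centerMass_eq_of_sum_1 _ _ hw1]
      exact hcm
    have happ : ∀ (u' : EuclideanSpace ℝ (Fin d)) (s' : ℝ),
        EqVisAux.lfE d u' s' x = ∑ i ∈ tf, wt i * EqVisAux.lfE d u' s' (z i) := by
      intro u' s'
      rw [← hxsum, map_sum]
      simp [smul_eq_mul]
    choose jdx hjlt hjz using hzS
    have hvle : ∀ i (hi : i ∈ tf), (inner ℝ (z i).1 v : ℝ) ≤ r := by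
      intro i hi
      rw [hjz i hi]
      exact hsupp' _ (hjlt i hi)
    have hsum_r : ∑ i ∈ tf, wt i * (inner ℝ (z i).1 v : ℝ) = r := by
      have h1 := happ v 0
      simp only [EqVisAux.lfE_apply, mul_zero, add_zero] at h1
      rw [hxr] at h1
      exact h1.symm
    have hzero : ∀ i ∈ tf, wt i * (r - (inner ℝ (z i).1 v : ℝ)) = 0 := by
      have hsumz : ∑ i ∈ tf, wt i * (r - (inner ℝ (z i).1 v : ℝ)) = 0 := by
        simp only [mul_sub]
        rw [Finset.sum_sub_distrib, ← Finset.sum_mul, hw1, one_mul, hsum_r, sub_self]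
      intro i hi
      refine (Finset.sum_eq_zero_iff_of_nonneg ?_).mp hsumz i hi
      intro i hi
      exact mul_nonneg (hw0 i hi) (by linarith [hvle i hi])
    rw [happ u s]
    have hterm : ∀ i ∈ tf, wt i * EqVisAux.lfE d u s (z i) = wt i * c := by
      intro i hi
      rcases eq_or_ne (wt i) 0 with h0 | h0
      · rw [h0, zero_mul, zero_mul]
      · have hri : (inner ℝ (z i).1 v : ℝ) = r := by
          rcases mul_eq_zero.mp (hzero i hi) with e | e
          · exact absurd e h0
          · linarith
        congr 1
        rw [hjz i hi]
        rw [hjz i hi] at hri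
        exact hvan _ (hjlt i hi) hri
    rw [Finset.sum_congr rfl hterm, ← Finset.sum_mul, hw1, one_mul]
  -- the value at the apex
  have hfpt : EqVisAux.lfE d u s pt = (inner ℝ (a jl) u : ℝ) + h jl * s := rfl
  -- conclusion
  refine ⟨x, hxI, ?_⟩
  apply Set.eq_singleton_iff_unique_mem.mpr
  constructor
  · refine ⟨left_mem_segment ℝ x pt, ?_⟩
    rw [hFeq] at hxF
    exact hxF.1
  · rintro y ⟨hyseg, hyQ⟩
    obtain ⟨α, β, hα, hβ, hαβ, rfl⟩ := hyseg
    have h1 : EqVisAux.lfE d u s (α • x + β • pt) ≤ c := hQle _ hyQ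
    have h2 : EqVisAux.lfE d u s (α • x + β • pt)
        = α * c + β * ((inner ℝ (a jl) u : ℝ) + h jl * s) := by
      rw [map_add, map_smul, map_smul, smul_eq_mul, smul_eq_mul, hfx, hfpt]
    have hβ0 : β = 0 := by
      rcases eq_or_lt_of_le hβ with e | e
      · exact e.symm
      · exfalso
        have hα' : α = 1 - β := by linarith
        rw [hα'] at h1 h2
        have h4 : β * ((inner ℝ (a jl) u : ℝ) + h jl * s - c) ≤ 0 := by nlinarith [h1, h2]
        have h5 := mul_pos e (sub_pos.mpr hstrict)
        linarith
    have hα1 : α = 1 := by linarith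
    rw [hβ0, hα1, one_smul, zero_smul, add_zero]
end

section
/- For integers d ≥ 2 even and n ≥ d+2, the following inequality holds: ∏_{i=1}^{d/2} ( (n−d−1+2i)! / (2i)! ) ≥ ( (n−1) / e^{3/2} )^{ d(n−d−1)/2 }. -/
open scoped BigOperators

open Finset

noncomputable def gg (x : ℝ) : ℝ := x * Real.log x
noncomputable def GG (x : ℝ) : ℝ := x ^ 2 / 2 * Real.log x - x ^ 2 / 4

lemma log_lb {t : ℝ} (h0 : 0 ≤ t) : t - t ^ 2 / 2 ≤ Real.log (1 + t) := by
  set f : ℝ → ℝ := fun x => Real.log (1 + x) - x + x ^ 2 / 2 with hf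
  have hder : ∀ x : ℝ, 0 ≤ x → HasDerivAt f (1 / (1 + x) - 1 + x) x := by
    intro x hx
    have hx1 : (0:ℝ) < 1 + x := by linarith
    have h1 : HasDerivAt (fun y : ℝ => 1 + y) 1 x := by
      simpa using (hasDerivAt_id x).const_add 1
    have h2 : HasDerivAt (fun y : ℝ => Real.log (1 + y)) (1 / (1 + x)) x := by
      simpa [one_div, Function.comp_def] using (Real.hasDerivAt_log (ne_of_gt hx1)).comp x h1
    have h3 : HasDerivAt (fun y : ℝ => y ^ 2 / 2) x x := by
      have := ((hasDerivAt_pow 2 x).div_const 2)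
      simpa using this
    have := (h2.sub (hasDerivAt_id x)).add h3
    exact this
  have hmono : MonotoneOn f (Set.Ici 0) := by
    apply monotoneOn_of_deriv_nonneg (convex_Ici 0)
    · intro x hx
      exact (hder x hx).continuousAt.continuousWithinAt
    · intro x hx
      rw [interior_Ici] at hx
      exact ((hder x (le_of_lt hx)).differentiableAt).differentiableWithinAt
    · intro x hx
      rw [interior_Ici] at hx
      rw [(hder x (le_of_lt hx)).deriv]
      have hx0 : (0:ℝ) < x := hx
      have hx1 : (0:ℝ) < 1 + x := by linarith
      have heq : 1 / (1 + x) - 1 + x = x ^ 2 / (1 + x) := by field_simp; ring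
      rw [heq]; positivity
  have h1 : f 0 ≤ f t := hmono (Set.mem_Ici.2 le_rfl) (Set.mem_Ici.2 h0) h0
  simp only [hf] at h1
  norm_num at h1
  linarith

lemma two_log_le {u : ℝ} (hu : 1 ≤ u) : 2 * Real.log u ≤ u - 1 / u := by
  set f : ℝ → ℝ := fun x => x - 1/x - 2 * Real.log x with hf
  have hder : ∀ x : ℝ, 0 < x → HasDerivAt f (1 + 1/x^2 - 2/x) x := by
    intro x hx
    have h1 : HasDerivAt (fun y:ℝ => y) 1 x := hasDerivAt_id x
    have h2 : HasDerivAt (fun y:ℝ => 1/y) (-(x^2)⁻¹) x := by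
      simpa using hasDerivAt_inv (ne_of_gt hx)
    have h3 : HasDerivAt (fun y:ℝ => 2 * Real.log y) (2 * x⁻¹) x :=
      (Real.hasDerivAt_log (ne_of_gt hx)).const_mul 2
    have := (h1.sub h2).sub h3
    rw [show (1:ℝ) + 1/x^2 - 2/x = 1 - -(x^2)⁻¹ - 2*x⁻¹ by ring]
    exact this
  have hmono : MonotoneOn f (Set.Ici 1) := by
    apply monotoneOn_of_deriv_nonneg (convex_Ici 1)
    · intro x hx
      have hx0 : (0:ℝ) < x := lt_of_lt_of_le one_pos hx
      exact (hder x hx0).continuousAt.continuousWithinAt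
    · intro x hx
      rw [interior_Ici] at hx
      have hx0 : (0:ℝ) < x := lt_trans one_pos hx
      exact ((hder x hx0).differentiableAt).differentiableWithinAt
    · intro x hx
      rw [interior_Ici] at hx
      have hx0 : (0:ℝ) < x := lt_trans one_pos hx
      rw [(hder x hx0).deriv]
      have h := sq_nonneg (1 - 1/x)
      have : (1 - 1/x)^2 = 1 + 1/x^2 - 2/x := by field_simp; ring
      linarith [this ▸ h]
  have h1 : f 1 ≤ f u := hmono (Set.mem_Ici.2 le_rfl) (Set.mem_Ici.2 hu) hu
  simp only [hf, Real.log_one] at h1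
  rw [one_div]
  norm_num at h1
  linarith

lemma fact_ratio (b : ℕ) (hb : 1 ≤ b) : ∀ a : ℕ, b ≤ a →
    Real.exp (gg a - gg b - ((a : ℝ) - (b : ℝ))) ≤ (Nat.factorial a : ℝ) / (Nat.factorial b : ℝ) := by
  intro a
  induction a with
  | zero => intro h; exact absurd (le_trans hb h) (by norm_num)
  | succ a ih =>
    intro h
    rcases Nat.lt_or_ge b (a+1) with hlt | hge
    · have hba : b ≤ a := by omega
      have ha1 : (1:ℝ) ≤ (a:ℝ) := by exact_mod_cast le_trans hb hba
      have ha0 : (0:ℝ) < a := by linarith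
      have hlog : Real.log ((a:ℝ)+1) - Real.log a ≤ 1/(a:ℝ) := by
        rw [← Real.log_div (by positivity) (ne_of_gt ha0)]
        have hp := Real.log_le_sub_one_of_pos (show (0:ℝ) < ((a:ℝ)+1)/a by positivity)
        have heq : ((a:ℝ)+1)/(a:ℝ) - 1 = 1/(a:ℝ) := by field_simp; ring
        linarith
      have key2 : gg ((a:ℝ)+1) - gg (a:ℝ) - 1 ≤ Real.log ((a:ℝ)+1) := by
        simp only [gg]
        have h2 := mul_le_mul_of_nonneg_left hlog (le_of_lt ha0)
        have h1 : (a:ℝ) * (1/(a:ℝ)) = 1 := by field_simp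
        nlinarith [h2]
      have key : Real.exp (gg ((a:ℝ)+1) - gg (a:ℝ) - 1) ≤ (a:ℝ)+1 :=
        le_trans (Real.exp_le_exp.2 key2) (le_of_eq (Real.exp_log (by linarith)))
      have ihh := ih hba
      have split : Real.exp (gg ((a+1:ℕ):ℝ) - gg (b:ℝ) - (((a+1:ℕ):ℝ) - (b:ℝ)))
          = Real.exp (gg ((a:ℝ)+1) - gg (a:ℝ) - 1) *
            Real.exp (gg (a:ℝ) - gg (b:ℝ) - ((a:ℝ) - (b:ℝ))) := by
        rw [← Real.exp_add]; push_cast; ring_nf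
      rw [split]
      calc Real.exp (gg ((a:ℝ)+1) - gg (a:ℝ) - 1) *
            Real.exp (gg (a:ℝ) - gg (b:ℝ) - ((a:ℝ) - (b:ℝ)))
          ≤ ((a:ℝ)+1) * ((Nat.factorial a : ℝ) / (Nat.factorial b : ℝ)) :=
            mul_le_mul key ihh (Real.exp_pos _).le (by positivity)
        _ = (Nat.factorial (a+1) : ℝ) / (Nat.factorial b : ℝ) := by
            rw [Nat.factorial_succ]; push_cast; ring
    · have hba : b = a + 1 := by omega
      subst hba
      have hne : (Nat.factorial (a+1) : ℝ) ≠ 0 := by positivity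
      simp [sub_self, Real.exp_zero, div_self hne]

lemma midpoint_bound {x : ℝ} (hx : 2 ≤ x) : gg x ≤ (GG (x+1) - GG (x-1))/2 + 1/8 := by
  have hx0 : (0:ℝ) < x := by linarith
  have h1' : 2*x - 1 ≤ 2*x^2 * (Real.log (x+1) - Real.log x) := by
    have ht := log_lb (show (0:ℝ) ≤ 1/x by positivity)
    have hlog : Real.log (1 + 1/x) = Real.log (x+1) - Real.log x := by
      rw [show 1 + 1/x = (x+1)/x by field_simp, Real.log_div (by linarith) (by linarith)]
    rw [hlog] at ht
    have hmul := mul_le_mul_of_nonneg_left ht (show (0:ℝ) ≤ 2*x^2 by positivity)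
    have heq : 2*x^2 * (1/x - (1/x)^2/2) = 2*x - 1 := by field_simp
    linarith [heq ▸ hmul]
  have h2' : (1:ℝ) ≤ x * (Real.log x - Real.log (x-1)) := by
    have hp := Real.log_le_sub_one_of_pos (show (0:ℝ) < (x-1)/x by
      apply div_pos <;> linarith)
    rw [Real.log_div (by linarith) (by linarith)] at hp
    have heq : (x-1)/x - 1 = -(1/x) := by field_simp; ring
    rw [heq] at hp
    have hmul := mul_le_mul_of_nonneg_left (neg_le_neg hp) (le_of_lt hx0)
    have heq2 : x * (1/x) = 1 := by field_simp
    nlinarith [hmul]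
  simp only [gg, GG]
  nlinarith [mul_le_mul_of_nonneg_left h1' (sq_nonneg (x+1)),
    mul_le_mul_of_nonneg_left h2' (show (0:ℝ) ≤ 2*x*(x-1)^2 by positivity),
    hx, sq_nonneg (x-1), sq_nonneg (x+1)]

lemma trap_bound {a : ℝ} (ha : 3 ≤ a) : GG (a+2) - GG a ≤ gg a + gg (a+2) := by
  have ha0 : (0:ℝ) < a := by linarith
  have hu : (1:ℝ) ≤ (a+2)/a := by rw [le_div_iff₀ ha0]; linarith
  have h := two_log_le hu
  rw [Real.log_div (by linarith) (by linarith)] at h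
  have key : a*(a+2)*(Real.log (a+2) - Real.log a) ≤ 2*(a+1) := by
    have hmul := mul_le_mul_of_nonneg_left h (show (0:ℝ) ≤ a*(a+2)/2 by positivity)
    have heq : a*(a+2)/2 * ((a+2)/a - 1/((a+2)/a)) = 2*(a+1) := by field_simp; ring
    nlinarith [hmul]
  simp only [gg, GG]
  nlinarith [key]

lemma sumA (D : ℕ) : ∑ i ∈ Icc 1 D, gg (2*(i:ℝ)) ≤ (GG (2*(D:ℝ)+1) - GG 1)/2 + (D:ℝ)/8 := by
  induction D with
  | zero => simp
  | succ D ih =>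
    rw [Finset.sum_Icc_succ_top (by omega : 1 ≤ D + 1)]
    have hmid := midpoint_bound (show (2:ℝ) ≤ 2*((D:ℝ)+1) by
      have : (0:ℝ) ≤ (D:ℝ) := Nat.cast_nonneg D
      linarith)
    have he2 : 2*((D:ℝ)+1)-1 = 2*(D:ℝ)+1 := by ring
    rw [he2] at hmid
    push_cast
    linarith

lemma sumB (em : ℝ) (hm : 1 ≤ em) : ∀ D : ℕ, 1 ≤ D →
    (GG (em+2*(D:ℝ)) + gg (em+2*(D:ℝ)) + gg (em+2) - GG (em+2))/2
      ≤ ∑ i ∈ Icc 1 D, gg (em+2*(i:ℝ)) := by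
  intro D
  induction D with
  | zero => intro h; exact absurd h (by norm_num)
  | succ D ih =>
    intro _
    rcases Nat.eq_zero_or_pos D with h0 | hD1
    · subst h0; norm_num; linarith
    · rw [Finset.sum_Icc_succ_top (by omega : 1 ≤ D + 1)]
      have ihh := ih hD1
      have htrap := trap_bound (show (3:ℝ) ≤ em + 2*(D:ℝ) by
        have : (1:ℝ) ≤ (D:ℝ) := by exact_mod_cast hD1
        linarith)
      have he : em + 2*(D:ℝ) + 2 = em + 2*((D:ℝ)+1) := by ring
      rw [he] at htrap
      push_cast
      linarith

lemma final_ineq (eD em L mu nu : ℝ) (hD : 1 ≤ eD) (hm : 1 ≤ em)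
    (hmu : mu ≤ L) (hnu : nu ≤ L) (hL : L ≤ 3/2*eD + 2*em + 2) :
    eD*em*(L - 3/2) ≤
      (((em+2*eD)^2/2*L - (em+2*eD)^2/4) + ((em+2*eD)*L) + ((em+2)*mu)
        - ((em+2)^2/2*mu - (em+2)^2/4))/2
      - (((2*eD+1)^2/2*nu - (2*eD+1)^2/4 + 1/4)/2 + eD/8) - eD*em := by
  nlinarith [mul_le_mul_of_nonneg_left hmu (show (0:ℝ) ≤ em*(em+2)/4 by nlinarith),
             mul_le_mul_of_nonneg_left hnu (show (0:ℝ) ≤ (2*eD+1)^2/4 by positivity),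
             hL, hD, hm]

/-- For even d ≥ 2 and n ≥ d+2,
∏_{i=1}^{d/2} (n−d−1+2i)!/(2i)! ≥ ((n−1)/e^{3/2})^{d(n−d−1)/2}. -/
theorem inscribable_neighborly_lower_bound (d n : ℕ) (hd : 2 ≤ d) (hde : Even d)
    (hn : d + 2 ≤ n) :
    (((n : ℝ) - 1) / Real.exp (3 / 2)) ^ (d * (n - d - 1) / 2) ≤
      ∏ i ∈ Finset.Icc 1 (d / 2),
        ((Nat.factorial (n - d - 1 + 2 * i) : ℝ) / (Nat.factorial (2 * i) : ℝ)) := by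
  obtain ⟨D, hdD⟩ := hde
  have hdD' : d = 2 * D := by omega
  set m := n - d - 1 with hmdef
  have hD1 : 1 ≤ D := by omega
  have hm1 : 1 ≤ m := by omega
  have hd2 : d / 2 = D := by omega
  have hexp : d * m / 2 = D * m := by
    rw [hdD', show 2*D*m = 2*(D*m) from by ring, Nat.mul_div_cancel_left _ (by norm_num)]
  rw [hd2, hexp]
  have hn' : n = 2*D + m + 1 := by omega
  have hNcast : (n:ℝ) - 1 = (m:ℝ) + 2*(D:ℝ) := by
    rw [hn']; push_cast; ring
  rw [hNcast]
  have hDR : (1:ℝ) ≤ (D:ℝ) := by exact_mod_cast hD1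
  have hmR : (1:ℝ) ≤ (m:ℝ) := by exact_mod_cast hm1
  have hN0 : (0:ℝ) < (m:ℝ) + 2*(D:ℝ) := by linarith
  have hstep1 : ∀ i ∈ Finset.Icc 1 D,
      Real.exp (gg ((m:ℝ)+2*(i:ℝ)) - gg (2*(i:ℝ)) - (m:ℝ))
        ≤ (Nat.factorial (m + 2*i) : ℝ) / (Nat.factorial (2*i) : ℝ) := by
    intro i hi
    rw [Finset.mem_Icc] at hi
    have h := fact_ratio (2*i) (by omega) (m + 2*i) (by omega)
    have e1 : ((m + 2*i : ℕ) : ℝ) = (m:ℝ) + 2*(i:ℝ) := by push_cast; ring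
    have e2 : ((2*i : ℕ) : ℝ) = 2*(i:ℝ) := by push_cast; ring
    rw [e1, e2] at h
    have e3 : (m:ℝ) + 2*(i:ℝ) - 2*(i:ℝ) = (m:ℝ) := by ring
    rw [e3] at h
    exact h
  have hsum : ((D*m : ℕ) : ℝ) * (Real.log ((m:ℝ) + 2*(D:ℝ)) - 3/2)
      ≤ ∑ i ∈ Finset.Icc 1 D, (gg ((m:ℝ)+2*(i:ℝ)) - gg (2*(i:ℝ)) - (m:ℝ)) := by
    have hA := sumA D
    have hB := sumB (m:ℝ) hmR D hD1
    have hmu : Real.log ((m:ℝ)+2) ≤ Real.log ((m:ℝ) + 2*(D:ℝ)) := by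
      apply Real.log_le_log (by linarith)
      linarith
    have hnu : Real.log (2*(D:ℝ)+1) ≤ Real.log ((m:ℝ) + 2*(D:ℝ)) := by
      apply Real.log_le_log (by linarith)
      linarith
    have hLub : Real.log ((m:ℝ) + 2*(D:ℝ)) ≤ 3/2*(D:ℝ) + 2*(m:ℝ) + 2 := by
      have h1 : Real.log (((m:ℝ) + 2*(D:ℝ)) / Real.exp 1)
          ≤ ((m:ℝ) + 2*(D:ℝ)) / Real.exp 1 - 1 :=
        Real.log_le_sub_one_of_pos (by positivity)
      rw [Real.log_div (ne_of_gt hN0) (Real.exp_ne_zero 1), Real.log_exp] at h1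
      have h2 : (2.7182818283 : ℝ) < Real.exp 1 := Real.exp_one_gt_d9
      have h3 : ((m:ℝ) + 2*(D:ℝ)) / Real.exp 1 ≤ ((m:ℝ) + 2*(D:ℝ)) / 2.7 := by
        apply div_le_div_of_nonneg_left hN0.le (by norm_num) (by linarith)
      have h4 : ((m:ℝ) + 2*(D:ℝ)) / 2.7 ≤ 3/2*(D:ℝ) + 2*(m:ℝ) + 2 := by
        rw [div_le_iff₀ (by norm_num : (0:ℝ) < 2.7)]
        nlinarith
      linarith
    have hfin := final_ineq (D:ℝ) (m:ℝ) (Real.log ((m:ℝ) + 2*(D:ℝ)))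
      (Real.log ((m:ℝ)+2)) (Real.log (2*(D:ℝ)+1)) hDR hmR hmu hnu hLub
    rw [Finset.sum_sub_distrib, Finset.sum_sub_distrib, Finset.sum_const,
      Nat.card_Icc, Nat.add_sub_cancel, nsmul_eq_mul]
    simp only [gg, GG] at hA hB ⊢
    rw [Real.log_one] at hA
    push_cast
    nlinarith [hA, hB, hfin]
  calc (((m:ℝ) + 2*(D:ℝ)) / Real.exp (3/2)) ^ (D*m)
      = Real.exp (((D*m : ℕ) : ℝ) * (Real.log ((m:ℝ) + 2*(D:ℝ)) - 3/2)) := by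
        rw [show ((m:ℝ) + 2*(D:ℝ)) / Real.exp (3/2)
            = Real.exp (Real.log ((m:ℝ) + 2*(D:ℝ)) - 3/2) by
          rw [Real.exp_sub, Real.exp_log hN0], ← Real.exp_nat_mul]
    _ ≤ Real.exp (∑ i ∈ Finset.Icc 1 D,
          (gg ((m:ℝ)+2*(i:ℝ)) - gg (2*(i:ℝ)) - (m:ℝ))) := Real.exp_le_exp.2 hsum
    _ = ∏ i ∈ Finset.Icc 1 D,
          Real.exp (gg ((m:ℝ)+2*(i:ℝ)) - gg (2*(i:ℝ)) - (m:ℝ)) := by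
        rw [Real.exp_sum]
    _ ≤ ∏ i ∈ Finset.Icc 1 D,
          ((Nat.factorial (m + 2*i) : ℝ) / (Nat.factorial (2*i) : ℝ)) :=
        Finset.prod_le_prod (fun i _ => (Real.exp_pos _).le) hstep1
end
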